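/- Let H be an N×N Hermitian complex matrix with an orthonormal eigenbasis {v_m} and eigenvalues {E_m}, let β ≥ 0, Δ > 0. For E' ∈ ℝ write N_{E',Δ} = #{m : E_m ∈ (E'−Δ, E']}. Suppose E ∈ ℝ satisfies N_{E,Δ} ≥ 1 and e^{−βE'} N_{E',Δ} ≤ e^{−βE} N_{E,Δ} for all E' ∈ ℝ. Suppose in addition there exists W > 0 such that Σ_{m : E_m ∈ (⟨H⟩_β − W/2, ⟨H⟩_β + W/2]} e^{−βE_m} ≥ Z_β/2, where ⟨H⟩_β = tr(H e^{−βH})/Z_β. Then for every N×N positive semidefinite matrix O: ⟨O⟩_{E,Δ} ≤ 2 e^{βΔ} (3 + W/Δ) · ⟨O⟩_β, where ⟨O⟩_{E,Δ} = N_{E,Δ}^{−1} Σ_{m : E_m ∈ (E−Δ,E]} ⟨v_m, O v_m⟩ and ⟨O⟩_β = tr(e^{−βH} O)/Z_β. -/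

import Mathlib

/-!
In the eigenbasis of `H` both averages become sums over eigenvalues: with `o_m = ⟨v_m, O v_m⟩ ≥ 0`,
`Z ⟨O⟩_β = ∑ e^{-βE_m} o_m ≥ e^{-βE} N_{E,Δ} ⟨O⟩_{E,Δ}`, keeping only the shell `(E-Δ, E]`.
Conversely, at least half of `Z` lies in the window of width `W`, which is covered by
`⌈W/Δ⌉ ≤ 3 + W/Δ` shells of width `Δ`; each carries weight at most
`e^{βΔ} e^{-βE'} N_{E',Δ} ≤ e^{βΔ} e^{-βE} N_{E,Δ}` by the maximality of `E`, so
`Z ≤ 2 e^{βΔ} (3 + W/Δ) e^{-βE} N_{E,Δ}`.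
-/

open scoped Matrix ComplexOrder

namespace Matrix
variable {n : Type*} [Fintype n] [DecidableEq n] {H : Matrix n n ℂ} {v : n → n → ℂ} {Em : n → ℝ}

theorem conjTranspose_mul_self_of_orthonormal
    (honb : ∀ m m', star (v m) ⬝ᵥ v m' = if m = m' then 1 else 0) :
    ((of v)ᵀ)ᴴ * (of v)ᵀ = 1 := by
  ext m m'
  simpa [mul_apply, one_apply, dotProduct] using honb m m'

theorem mul_eq_mul_diagonal_of_eigen (heig : ∀ m, H *ᵥ v m = Em m • v m) :
    H * (of v)ᵀ = (of v)ᵀ * diagonal (fun m => (Em m : ℂ)) := by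
  ext i m
  rw [mul_diagonal]
  simpa [mulVec, dotProduct, mul_apply, mul_comm] using congrFun (heig m) i

theorem exp_smul_eq_of_orthonormal_eigenbasis
    (honb : ∀ m m', star (v m) ⬝ᵥ v m' = if m = m' then 1 else 0)
    (heig : ∀ m, H *ᵥ v m = Em m • v m) (c : ℂ) :
    NormedSpace.exp (c • H)
      = (of v)ᵀ * diagonal (fun m => Complex.exp (c * Em m)) * ((of v)ᵀ)ᴴ := by
  set U := (of v)ᵀ
  have hUU : Uᴴ * U = 1 := conjTranspose_mul_self_of_orthonormal honb
  have hUU' : U * Uᴴ = 1 := mul_eq_one_comm.mp hUU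
  have hH : c • H = U * diagonal (fun m => c * Em m) * Uᴴ := by
    calc c • H = c • (H * U * Uᴴ) := by rw [mul_assoc, hUU', mul_one]
      _ = U * (c • diagonal fun m => (Em m : ℂ)) * Uᴴ := by
        rw [mul_eq_mul_diagonal_of_eigen heig, mul_smul_comm, smul_mul_assoc]
      _ = _ := by rw [← diagonal_smul]; rfl
  have hconj : ∀ A : Matrix n n ℂ, NormedSpace.exp (U * A * Uᴴ) = U * NormedSpace.exp A * Uᴴ :=
    exp_units_conj ⟨U, Uᴴ, hUU', hUU⟩
  rw [hH, hconj, exp_diagonal, Pi.exp_def]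
  simp [Complex.exp_eq_exp_ℂ]

theorem trace_exp_smul_mul_eq_sum
    (honb : ∀ m m', star (v m) ⬝ᵥ v m' = if m = m' then 1 else 0)
    (heig : ∀ m, H *ᵥ v m = Em m • v m) (c : ℂ) (O : Matrix n n ℂ) :
    (NormedSpace.exp (c • H) * O).trace
      = ∑ m, Complex.exp (c * Em m) * (star (v m) ⬝ᵥ O *ᵥ v m) := by
  have hdiag : ∀ m, (((of v)ᵀ)ᴴ * O * (of v)ᵀ) m m = star (v m) ⬝ᵥ O *ᵥ v m :=
    fun m => mul_mul_apply _ _ _ m m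
  rw [exp_smul_eq_of_orthonormal_eigenbasis honb heig, mul_assoc, mul_assoc, trace_mul_comm,
    mul_assoc, trace]
  simp only [diag_apply, diagonal_mul, hdiag]

theorem re_trace_exp_neg_smul_mul
    (honb : ∀ m m', star (v m) ⬝ᵥ v m' = if m = m' then 1 else 0)
    (heig : ∀ m, H *ᵥ v m = Em m • v m) (β : ℝ) (O : Matrix n n ℂ) :
    (NormedSpace.exp ((-(β : ℂ)) • H) * O).trace.re
      = ∑ m, Real.exp (-β * Em m) * (star (v m) ⬝ᵥ O *ᵥ v m).re := by
  rw [trace_exp_smul_mul_eq_sum honb heig, Complex.re_sum]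
  refine Finset.sum_congr rfl fun m _ => ?_
  rw [← Complex.ofReal_neg, ← Complex.ofReal_mul, ← Complex.ofReal_exp, Complex.re_ofReal_mul]

theorem re_trace_exp_neg_smul
    (honb : ∀ m m', star (v m) ⬝ᵥ v m' = if m = m' then 1 else 0)
    (heig : ∀ m, H *ᵥ v m = Em m • v m) (β : ℝ) :
    (NormedSpace.exp ((-(β : ℂ)) • H)).trace.re = ∑ m, Real.exp (-β * Em m) := by
  simpa [honb] using re_trace_exp_neg_smul_mul honb heig β 1

end Matrix

open Finset

section EnergyShell
variable {ι : Type*} [Fintype ι] (Em : ι → ℝ)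

noncomputable def energyShell (E Δ : ℝ) : Finset ι := univ.filter fun m => E - Δ < Em m ∧ Em m ≤ E

variable {Em}

theorem mem_energyShell_ceil {lo Δ : ℝ} (hΔ : 0 < Δ) {m : ι} (hm : lo < Em m) :
    m ∈ energyShell Em (lo + ⌈(Em m - lo) / Δ⌉₊ * Δ) Δ := by
  have hpos : 0 ≤ (Em m - lo) / Δ := div_nonneg (sub_pos.mpr hm).le hΔ.le
  have hlt : ⌈(Em m - lo) / Δ⌉₊ * Δ < Em m - lo + Δ := by
    have := mul_lt_mul_of_pos_right (Nat.ceil_lt_add_one hpos) hΔ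
    rwa [add_mul, div_mul_cancel₀ _ hΔ.ne', one_mul] at this
  have hle : Em m - lo ≤ ⌈(Em m - lo) / Δ⌉₊ * Δ := (div_le_iff₀ hΔ).mp (Nat.le_ceil _)
  simp only [energyShell, mem_filter, mem_univ, true_and]
  constructor <;> linarith

theorem sum_le_sum_energyShell {f : ι → ℝ} (hf : ∀ m, 0 ≤ f m) {lo hi Δ : ℝ} (hΔ : 0 < Δ) :
    ∑ m ∈ univ.filter (fun m => lo < Em m ∧ Em m ≤ hi), f m
      ≤ ∑ k ∈ Icc 1 ⌈(hi - lo) / Δ⌉₊, ∑ m ∈ energyShell Em (lo + k * Δ) Δ, f m := by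
  have hmaps : ∀ m ∈ univ.filter (fun m => lo < Em m ∧ Em m ≤ hi),
      ⌈(Em m - lo) / Δ⌉₊ ∈ Icc 1 ⌈(hi - lo) / Δ⌉₊ := by
    intro m hm
    obtain ⟨hlo, hhi⟩ := (mem_filter.mp hm).2
    exact mem_Icc.mpr ⟨Nat.one_le_ceil_iff.mpr (div_pos (sub_pos.mpr hlo) hΔ), by gcongr⟩
  rw [← sum_fiberwise_of_maps_to hmaps]
  refine sum_le_sum fun k _ => sum_le_sum_of_subset_of_nonneg ?_ fun m _ _ => hf m
  intro m hm
  obtain ⟨hwindow, rfl⟩ := mem_filter.mp hm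
  exact mem_energyShell_ceil hΔ (mem_filter.mp hwindow).2.1

theorem sum_exp_energyShell_le {β : ℝ} (hβ : 0 ≤ β) (E Δ : ℝ) :
    ∑ m ∈ energyShell Em E Δ, Real.exp (-β * Em m)
      ≤ Real.exp (β * Δ) * (Real.exp (-β * E) * #(energyShell Em E Δ)) := by
  calc ∑ m ∈ energyShell Em E Δ, Real.exp (-β * Em m)
      ≤ ∑ _m ∈ energyShell Em E Δ, Real.exp (β * Δ) * Real.exp (-β * E) := by
        refine sum_le_sum fun m hm => ?_
        have hm' := (mem_filter.mp hm).2.1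
        rw [← Real.exp_add, Real.exp_le_exp]
        nlinarith
    _ = _ := by rw [sum_const, nsmul_eq_mul]; ring

theorem exp_mul_sum_energyShell_le {β : ℝ} (hβ : 0 ≤ β) {o : ι → ℝ} (ho : ∀ m, 0 ≤ o m)
    (E Δ : ℝ) :
    Real.exp (-β * E) * ∑ m ∈ energyShell Em E Δ, o m ≤ ∑ m, Real.exp (-β * Em m) * o m := by
  rw [mul_sum]
  calc ∑ m ∈ energyShell Em E Δ, Real.exp (-β * E) * o m
      ≤ ∑ m ∈ energyShell Em E Δ, Real.exp (-β * Em m) * o m := by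
        refine sum_le_sum fun m hm => ?_
        have hm' := (mem_filter.mp hm).2.2
        exact mul_le_mul_of_nonneg_right (Real.exp_le_exp.mpr (by nlinarith)) (ho m)
    _ ≤ _ := sum_le_sum_of_subset_of_nonneg (subset_univ _) fun m _ _ =>
        mul_nonneg (Real.exp_pos _).le (ho m)

theorem sum_exp_le_of_concentrated {β Δ E μ W : ℝ} (hβ : 0 ≤ β) (hΔ : 0 < Δ) (hW : 0 ≤ W)
    (hmax : ∀ E', Real.exp (-β * E') * #(energyShell Em E' Δ)
      ≤ Real.exp (-β * E) * #(energyShell Em E Δ))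
    (hconc : (∑ m, Real.exp (-β * Em m)) / 2
      ≤ ∑ m ∈ univ.filter (fun m => μ - W / 2 < Em m ∧ Em m ≤ μ + W / 2), Real.exp (-β * Em m)) :
    ∑ m, Real.exp (-β * Em m)
      ≤ 2 * Real.exp (β * Δ) * (3 + W / Δ) * (Real.exp (-β * E) * #(energyShell Em E Δ)) := by
  set B := Real.exp (β * Δ) * (Real.exp (-β * E) * #(energyShell Em E Δ))
  have hshell : ∀ k : ℕ,
      ∑ m ∈ energyShell Em (μ - W / 2 + k * Δ) Δ, Real.exp (-β * Em m) ≤ B := fun k =>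
    (sum_exp_energyShell_le hβ _ Δ).trans (mul_le_mul_of_nonneg_left (hmax _) (Real.exp_pos _).le)
  have hcover := sum_le_sum_energyShell (fun m => (Real.exp_pos (-β * Em m)).le) hΔ
    (Em := Em) (lo := μ - W / 2) (hi := μ + W / 2)
  have hK : (⌈(μ + W / 2 - (μ - W / 2)) / Δ⌉₊ : ℝ) ≤ 3 + W / Δ := by
    have := Nat.ceil_lt_add_one (div_nonneg hW hΔ.le)
    rw [show μ + W / 2 - (μ - W / 2) = W by ring]
    linarith
  set K := ⌈(μ + W / 2 - (μ - W / 2)) / Δ⌉₊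
  calc ∑ m, Real.exp (-β * Em m)
      ≤ 2 * ∑ k ∈ Icc 1 K, ∑ m ∈ energyShell Em (μ - W / 2 + k * Δ) Δ,
          Real.exp (-β * Em m) := by linarith
    _ ≤ 2 * (K * B) := by
        grw [sum_le_sum fun k _ => hshell k, sum_const, Nat.card_Icc, add_tsub_cancel_right,
          nsmul_eq_mul]
    _ ≤ 2 * ((3 + W / Δ) * B) := by gcongr
    _ = _ := by ring

end EnergyShell

theorem microcanonical_le_canonical_general
    (N : ℕ) (H : Matrix (Fin N) (Fin N) ℂ)
    (v : Fin N → Fin N → ℂ) (Em : Fin N → ℝ)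
    (honb : ∀ m m', star (v m) ⬝ᵥ v m' = if m = m' then 1 else 0)
    (heig : ∀ m, H.mulVec (v m) = Em m • v m)
    (β Δ E : ℝ) (hβ : 0 ≤ β) (hΔ : 0 < Δ)
    -- the shell (E-Δ, E] is nonempty
    (hNE : 1 ≤ (Finset.univ.filter fun m => E - Δ < Em m ∧ Em m ≤ E).card)
    -- E maximizes e^{-βE'} N_{E',Δ}
    (hmax : ∀ E' : ℝ,
      Real.exp (-β * E') *
          ((Finset.univ.filter fun m => E' - Δ < Em m ∧ Em m ≤ E').card : ℝ)
        ≤ Real.exp (-β * E) *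
          ((Finset.univ.filter fun m => E - Δ < Em m ∧ Em m ≤ E).card : ℝ))
    -- concentration of the canonical energy distribution in a window of width W
    (W : ℝ) (hW : 0 < W)
    (hconc :
      ((NormedSpace.exp ((-(β : ℂ)) • H)).trace).re / 2
        ≤ ∑ m ∈ Finset.univ.filter (fun m =>
            ((NormedSpace.exp ((-(β : ℂ)) • H) * H).trace).re
                / ((NormedSpace.exp ((-(β : ℂ)) • H)).trace).re - W / 2 < Em m ∧
            Em m ≤ ((NormedSpace.exp ((-(β : ℂ)) • H) * H).trace).re
                / ((NormedSpace.exp ((-(β : ℂ)) • H)).trace).re + W / 2),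
            Real.exp (-β * Em m))
    (O : Matrix (Fin N) (Fin N) ℂ) (hO : O.PosSemidef) :
    (∑ m ∈ Finset.univ.filter (fun m => E - Δ < Em m ∧ Em m ≤ E),
        (star (v m) ⬝ᵥ O.mulVec (v m)).re)
        / ((Finset.univ.filter fun m => E - Δ < Em m ∧ Em m ≤ E).card : ℝ)
      ≤ 2 * Real.exp (β * Δ) * (3 + W / Δ) *
        (((NormedSpace.exp ((-(β : ℂ)) • H) * O).trace).re
          / ((NormedSpace.exp ((-(β : ℂ)) • H)).trace).re) := by
  rw [Matrix.re_trace_exp_neg_smul honb heig] at hconc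
  rw [Matrix.re_trace_exp_neg_smul_mul honb heig, Matrix.re_trace_exp_neg_smul honb heig]
  change (∑ m ∈ energyShell Em E Δ, (star (v m) ⬝ᵥ O *ᵥ v m).re) / (#(energyShell Em E Δ) : ℝ) ≤ _
  have ho : ∀ m, 0 ≤ (star (v m) ⬝ᵥ O *ᵥ v m).re := fun m =>
    (Complex.le_def.mp (hO.dotProduct_mulVec_nonneg (v m))).1
  have hN : (0 : ℝ) < #(energyShell Em E Δ) := by exact_mod_cast hNE
  obtain ⟨m₀, -⟩ := card_pos.mp hNE
  have hZ : 0 < ∑ m, Real.exp (-β * Em m) :=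
    sum_pos (fun m _ => Real.exp_pos _) ⟨m₀, mem_univ m₀⟩
  have hZle := sum_exp_le_of_concentrated hβ hΔ hW.le hmax hconc
  have hTge := exp_mul_sum_energyShell_le (Em := Em) hβ ho E Δ
  have hC : 0 ≤ 2 * Real.exp (β * Δ) * (3 + W / Δ) := by
    have := div_pos hW hΔ
    positivity
  rw [mul_div_assoc', div_le_div_iff₀ hN hZ]
  linarith [mul_le_mul_of_nonneg_left hZle (sum_nonneg fun m (_ : m ∈ energyShell Em E Δ) => ho m),
    mul_le_mul_of_nonneg_left hTge (mul_nonneg hC hN.le)]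

/-- inequality (S.38): if the canonical energy distribution is
concentrated in a window of width `W` around `⟨H⟩_β`, and `E` maximizes
`e^{-βE'} N_{E',Δ}`, then the microcanonical average of any positive semidefinite `O`
over the shell `(E-Δ, E]` is at most `2 e^{βΔ} (3 + W/Δ)` times its canonical average. -/
theorem microcanonical_le_canonical
    (N : ℕ) (H : Matrix (Fin N) (Fin N) ℂ) (hH : H.IsHermitian)
    (v : Fin N → Fin N → ℂ) (Em : Fin N → ℝ)
    (honb : ∀ m m', star (v m) ⬝ᵥ v m' = if m = m' then 1 else 0)
    (heig : ∀ m, H.mulVec (v m) = Em m • v m)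
    (β Δ E : ℝ) (hβ : 0 ≤ β) (hΔ : 0 < Δ)
    -- the shell (E-Δ, E] is nonempty
    (hNE : 1 ≤ (Finset.univ.filter fun m => E - Δ < Em m ∧ Em m ≤ E).card)
    -- E maximizes e^{-βE'} N_{E',Δ}
    (hmax : ∀ E' : ℝ,
      Real.exp (-β * E') *
          ((Finset.univ.filter fun m => E' - Δ < Em m ∧ Em m ≤ E').card : ℝ)
        ≤ Real.exp (-β * E) *
          ((Finset.univ.filter fun m => E - Δ < Em m ∧ Em m ≤ E).card : ℝ))
    -- concentration of the canonical energy distribution in a window of width W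
    (W : ℝ) (hW : 0 < W)
    (hconc :
      ((NormedSpace.exp ((-(β : ℂ)) • H)).trace).re / 2
        ≤ ∑ m ∈ Finset.univ.filter (fun m =>
            ((NormedSpace.exp ((-(β : ℂ)) • H) * H).trace).re
                / ((NormedSpace.exp ((-(β : ℂ)) • H)).trace).re - W / 2 < Em m ∧
            Em m ≤ ((NormedSpace.exp ((-(β : ℂ)) • H) * H).trace).re
                / ((NormedSpace.exp ((-(β : ℂ)) • H)).trace).re + W / 2),
            Real.exp (-β * Em m))
    (O : Matrix (Fin N) (Fin N) ℂ) (hO : O.PosSemidef) :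
    (∑ m ∈ Finset.univ.filter (fun m => E - Δ < Em m ∧ Em m ≤ E),
        (star (v m) ⬝ᵥ O.mulVec (v m)).re)
        / ((Finset.univ.filter fun m => E - Δ < Em m ∧ Em m ≤ E).card : ℝ)
      ≤ 2 * Real.exp (β * Δ) * (3 + W / Δ) *
        (((NormedSpace.exp ((-(β : ℂ)) • H) * O).trace).re
          / ((NormedSpace.exp ((-(β : ℂ)) • H)).trace).re) :=
  microcanonical_le_canonical_general N H v Em honb heig β Δ E hβ hΔ hNE hmax W hW hconc O hO
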